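/- arXiv:2605.10196 — 2 statements merged into one kernel-verified Lean document; each statement's English description precedes it below -/
import Mathlib

section
/- Let τ be a real number, ε > 0, β > 0, and let f*, μ*, σ*, f, μ, σ be real numbers with σ* > 0 and σ > 0. Assume: (i) f* ≥ τ + ε (there is a remaining margin-hit); (ii) f ≤ τ − ε (the selected point is a true non-hit); (iii) |f* − μ*| ≤ β·σ* and |f − μ| ≤ β·σ (calibrated posterior); (iv) (τ − μ)/σ ≤ (τ − μ*)/σ* (the selected point has at least as large a posterior hit probability as the margin-hit). Then σ ≥ ε/(2β). -/
/-- Lemma A.3 (mistake implies large uncertainty), algebraic form: if `f* ≥ τ + ε`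
is a remaining margin-hit, `f ≤ τ − ε` is a selected true non-hit, the posterior is
calibrated (`|f* − μ*| ≤ β·σ*` and `|f − μ| ≤ β·σ`), and the selected point has at
least as large a posterior hit probability (`(τ − μ)/σ ≤ (τ − μ*)/σ*`), then
`σ ≥ ε/(2β)`. -/
theorem stmt_7 (τ ε β fStar μStar σStar f μ σ : ℝ) (hε : 0 < ε) (hβ : 0 < β)
    (hσStar : 0 < σStar) (hσ : 0 < σ)
    (hfStar : fStar ≥ τ + ε) (hf : f ≤ τ - ε)
    (hcalStar : |fStar - μStar| ≤ β * σStar) (hcal : |f - μ| ≤ β * σ)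
    (hsel : (τ - μ) / σ ≤ (τ - μStar) / σStar) :
    σ ≥ ε / (2 * β) := by
  rw [abs_le] at hcalStar hcal
  have h2 : (τ - μStar) / σStar ≤ β := by
    rw [div_le_iff₀ hσStar]
    nlinarith [hcalStar.1]
  have h1 : ε - β * σ ≤ τ - μ := by nlinarith [hcal.2]
  have h3 : (τ - μ) / σ ≤ β := le_trans hsel h2
  rw [div_le_iff₀ hσ] at h3
  rw [ge_iff_le, div_le_iff₀ (by positivity : (0:ℝ) < 2 * β)]
  nlinarith
end

section
/- Let τ be a real number, ε > 0, β > 0, and let f*, μ*, σ*, f, μ, σ be real numbers with σ* > 0 and σ > 0, satisfying: f* ≥ τ + ε, f ≤ τ − ε, |f* − μ*| ≤ β·σ*, |f − μ| ≤ β·σ, and (τ − μ)/σ ≤ (τ − μ*)/σ*. Then max(0, (τ − μ)/σ) ≤ (2β²/ε)·σ. -/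
/-- Step A.4 inequality: under the hypotheses of Lemma A.3 (mistake implies large
uncertainty), the positive part of the standardized gap of the selected non-hit is
bounded by `(2β²/ε)·σ`. -/
theorem stmt_8 (τ ε β fStar μStar σStar f μ σ : ℝ) (hε : 0 < ε) (hβ : 0 < β)
    (hσStar : 0 < σStar) (hσ : 0 < σ)
    (hfStar : fStar ≥ τ + ε) (hf : f ≤ τ - ε)
    (hcalStar : |fStar - μStar| ≤ β * σStar) (hcal : |f - μ| ≤ β * σ)
    (hsel : (τ - μ) / σ ≤ (τ - μStar) / σStar) :
    max 0 ((τ - μ) / σ) ≤ (2 * β ^ 2 / ε) * σ := by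
  rw [abs_le] at hcalStar hcal
  have h1 : τ - μStar ≤ β * σStar := by linarith [hcalStar.1]
  have h2 : (τ - μ) / σ ≤ β := by
    refine hsel.trans ?_
    rw [div_le_iff₀ hσStar]
    linarith
  have hτμ : τ - μ ≤ β * σ := by
    rw [div_le_iff₀ hσ] at h2; linarith
  have h3 : ε - β * σ ≤ τ - μ := by linarith [hcal.2]
  have h4 : ε ≤ 2 * β * σ := by linarith
  have hRHS : β ≤ 2 * β ^ 2 / ε * σ := by
    rw [div_mul_eq_mul_div, le_div_iff₀ hε]
    nlinarith
  exact max_le (le_trans hβ.le hRHS) (h2.trans hRHS)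
end
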